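/- arXiv:2209.12132 — 5 statements merged into one kernel-verified Lean document; each statement's English description precedes it below -/
import Mathlib

section
/- Let G be a finite simple graph, k ≥ 1, M a k-limited spanning subgraph of G, and P an M-augmenting trail with endpoints u and w, and let M' be the spanning subgraph of G whose edge set is the symmetric difference E(M) Δ E(P). If u ≠ w, then deg_{M'}(u) = deg_M(u) + 1, deg_{M'}(w) = deg_M(w) + 1, and deg_{M'}(v) = deg_M(v) for every vertex v ∉ {u, w}; if u = w, then deg_{M'}(u) = deg_M(u) + 2 and deg_{M'}(v) = deg_M(v) for every vertex v ≠ u. -/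
open SimpleGraph

variable {V : Type*}

/-- The degree of a vertex `v` in a (sub)graph `M`. -/
noncomputable def mdeg (M : SimpleGraph V) (v : V) : ℕ := (M.neighborSet v).ncard

/-- `M` is a `k`-limited spanning subgraph of `G`: a subgraph on all the vertices of `G`
with all degrees at most `k`. -/
def IsKLimitedSpanning (G M : SimpleGraph V) (k : ℕ) : Prop :=
  M ≤ G ∧ ∀ v : V, mdeg M v ≤ k

/-- `F` is a `k`-factor of `G`: a spanning subgraph all of whose degrees equal `k`. -/
def IsKFactor (G F : SimpleGraph V) (k : ℕ) : Prop :=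
  F ≤ G ∧ ∀ v : V, mdeg F v = k

/-- The deficiency `σ(M) = ∑_{v} (k - deg_M v)`. -/
noncomputable def sigmaDef [Fintype V] (M : SimpleGraph V) (k : ℕ) : ℕ :=
  ∑ v : V, (k - mdeg M v)

/-- An `M`-alternating trail: a trail whose consecutive edges alternate between
membership and non-membership in `E(M)`. -/
def IsAltTrail {G : SimpleGraph V} (M : SimpleGraph V) {u v : V} (p : G.Walk u v) : Prop :=
  p.IsTrail ∧ ∀ (i : ℕ) (h : i + 1 < p.edges.length),
    ((p.edges[i]'(Nat.lt_of_succ_lt h)) ∈ M.edgeSet ↔ (p.edges[i+1]'h) ∉ M.edgeSet)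

/-- An `M`-augmenting trail (with respect to the bound `k`): an `M`-alternating trail whose
first and last edges are not in `E(M)`, whose endpoints are unfilled in `M`, all of whose
inner vertex visits are filled in `M`, and which, if closed at `v₀ = u = v`, additionally
satisfies `deg_M v₀ < k - 1`. -/
def IsAugTrail (G M : SimpleGraph V) (k : ℕ) {u v : V} (p : G.Walk u v) : Prop :=
  IsAltTrail M p ∧
  p.edges ≠ [] ∧
  (∀ e, p.edges.head? = some e → e ∉ M.edgeSet) ∧
  (∀ e, p.edges.getLast? = some e → e ∉ M.edgeSet) ∧
  mdeg M u < k ∧ mdeg M v < k ∧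
  (∀ w ∈ p.support.tail.dropLast, mdeg M w = k) ∧
  (u = v → mdeg M u < k - 1)

/-! Flipping the edges of a trail `P` raises the degree of `x` by the number of edges of `P` at
`x` outside `M` and lowers it by the number of those inside `M`. Along an alternating walk every
passage through a vertex uses one edge of each kind, so only the two ends of the walk survive in
this difference, each counted with the sign of its end edge; for an augmenting trail both end
edges lie outside `M`. -/

open scoped symmDiff

theorem Set.ncard_symmDiff_add_ncard_inter {α : Type*} {s t : Set α} (hs : s.Finite)
    (ht : t.Finite) : (s ∆ t).ncard + (s ∩ t).ncard = s.ncard + (t \ s).ncard := by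
  rw [Set.symmDiff_def, Set.ncard_union_eq disjoint_sdiff_sdiff hs.sdiff ht.sdiff,
    ← Set.ncard_inter_add_ncard_sdiff_eq_ncard s t hs]
  omega

theorem List.Nodup.ncard_setOf_mem_and {α : Type*} {l : List α} (hl : l.Nodup)
    (q : α → Prop) [DecidablePred q] : {a | a ∈ l ∧ q a}.ncard = l.countP (fun a => q a) := by
  classical
  have hset : {a | a ∈ l ∧ q a} = ↑(l.filter (fun a => q a)).toFinset := by ext; simp
  rw [hset, Set.ncard_coe_finset, List.toFinset_card_of_nodup (hl.filter _),
    List.countP_eq_length_filter]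

open scoped Classical in
lemma ite_mem_mk {α : Type*} {x u v : α} (huv : u ≠ v) (c : ℤ) :
    (if x ∈ s(u, v) then c else 0) = (if x = u then c else 0) + (if x = v then c else 0) := by
  rcases eq_or_ne x u with rfl | hxu
  · simp [huv]
  · simp [hxu]

namespace SimpleGraph

lemma mdeg_eq_ncard_incidenceSet (M : SimpleGraph V) (x : V) :
    mdeg M x = (M.incidenceSet x).ncard := by
  classical exact Nat.card_congr (M.incidenceSetEquivNeighborSet x).symm

lemma incidenceSet_fromEdgeSet_symmDiff (M : SimpleGraph V) {S : Set (Sym2 V)}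
    (hS : ∀ e ∈ S, ¬e.IsDiag) (x : V) :
    (fromEdgeSet (M.edgeSet ∆ S)).incidenceSet x = M.incidenceSet x ∆ {e ∈ S | x ∈ e} := by
  ext e
  have hM_diag := M.not_isDiag_of_mem_edgeSet (e := e)
  have hS_diag := hS e
  simp only [incidenceSet, edgeSet_fromEdgeSet, Set.mem_symmDiff, Set.mem_sdiff,
    Set.mem_ofPred_eq, Sym2.mem_diagSet]
  tauto

lemma mdeg_fromEdgeSet_symmDiff_add [Finite V] (M : SimpleGraph V) {S : Set (Sym2 V)}
    (hS : ∀ e ∈ S, ¬e.IsDiag) (x : V) :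
    mdeg (fromEdgeSet (M.edgeSet ∆ S)) x + {e ∈ S | x ∈ e ∧ e ∈ M.edgeSet}.ncard
      = mdeg M x + {e ∈ S | x ∈ e ∧ e ∉ M.edgeSet}.ncard := by
  have hinter : M.incidenceSet x ∩ {e ∈ S | x ∈ e} = {e ∈ S | x ∈ e ∧ e ∈ M.edgeSet} := by
    ext; simp only [incidenceSet, Set.mem_inter_iff, Set.mem_ofPred_eq]; tauto
  have hdiff : {e ∈ S | x ∈ e} \ M.incidenceSet x = {e ∈ S | x ∈ e ∧ e ∉ M.edgeSet} := by
    ext; simp only [incidenceSet, Set.mem_sdiff, Set.mem_ofPred_eq]; tauto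
  simp only [mdeg_eq_ncard_incidenceSet, incidenceSet_fromEdgeSet_symmDiff M hS, ← hinter,
    ← hdiff]
  exact Set.ncard_symmDiff_add_ncard_inter (Set.toFinite _) (Set.toFinite _)

open scoped Classical in
lemma Walk.IsTrail.mdeg_fromEdgeSet_symmDiff_add [Finite V] {G : SimpleGraph V} {u w : V}
    {p : G.Walk u w} (hp : p.IsTrail) (M : SimpleGraph V) (x : V) :
    mdeg (fromEdgeSet (M.edgeSet ∆ {e | e ∈ p.edges})) x
        + p.edges.countP (fun e => x ∈ e ∧ e ∈ M.edgeSet)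
      = mdeg M x + p.edges.countP (fun e => x ∈ e ∧ e ∉ M.edgeSet) := by
  have hS : ∀ e ∈ {e | e ∈ p.edges}, ¬e.IsDiag := fun e he =>
    G.not_isDiag_of_mem_edgeSet (p.edges_subset_edgeSet he)
  simpa only [Set.mem_ofPred_eq, hp.edges_nodup.ncard_setOf_mem_and] using
    SimpleGraph.mdeg_fromEdgeSet_symmDiff_add M hS x

open scoped Classical in
noncomputable def edgeSign (M : SimpleGraph V) (e : Sym2 V) : ℤ := if e ∈ M.edgeSet then -1 else 1

open scoped Classical in
lemma countP_notMem_sub_countP_mem_cons (M : SimpleGraph V) (x : V) (e : Sym2 V)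
    (l : List (Sym2 V)) :
    ((e :: l).countP (fun f => x ∈ f ∧ f ∉ M.edgeSet) : ℤ)
        - (e :: l).countP (fun f => x ∈ f ∧ f ∈ M.edgeSet)
      = (if x ∈ e then M.edgeSign e else 0)
        + ((l.countP (fun f => x ∈ f ∧ f ∉ M.edgeSet) : ℤ)
          - l.countP (fun f => x ∈ f ∧ f ∈ M.edgeSet)) := by
  simp only [List.countP_cons, edgeSign]
  by_cases hx : x ∈ e <;> by_cases he : e ∈ M.edgeSet <;> simp [hx, he] <;> ring

open scoped Classical in
lemma Walk.countP_notMem_sub_countP_mem {G M : SimpleGraph V} {u w : V} (p : G.Walk u w)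
    (hp : ¬p.Nil) (halt : p.edges.IsChain (fun e f => e ∈ M.edgeSet ↔ f ∉ M.edgeSet)) (x : V) :
    (p.edges.countP (fun e => x ∈ e ∧ e ∉ M.edgeSet) : ℤ)
        - p.edges.countP (fun e => x ∈ e ∧ e ∈ M.edgeSet)
      = (if x = u then M.edgeSign s(u, p.snd) else 0)
        + (if x = w then M.edgeSign s(p.penultimate, w) else 0) := by
  induction p with
  | nil => exact absurd .nil hp
  | @cons u v w h q ih =>
    rw [edges_cons, countP_notMem_sub_countP_mem_cons, ite_mem_mk h.ne, snd_cons]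
    cases q with
    | nil => simp [penultimate_cons_nil]
    | cons h' r =>
      obtain ⟨hrel, hq⟩ := List.isChain_cons.mp halt
      have hsign : M.edgeSign s(v, (cons h' r).snd) = - M.edgeSign s(u, v) := by
        have halt_uv := hrel _ rfl
        simp only [edgeSign]
        split_ifs <;> simp_all
      rw [ih not_nil_cons hq, hsign, penultimate_cons_of_not_nil _ _ not_nil_cons]
      split_ifs <;> ring

open scoped Classical in
lemma Walk.mdeg_fromEdgeSet_symmDiff [Finite V] {G M : SimpleGraph V} {u w : V}
    {p : G.Walk u w} (htrail : p.IsTrail) (hp : ¬p.Nil)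
    (halt : p.edges.IsChain (fun e f => e ∈ M.edgeSet ↔ f ∉ M.edgeSet))
    (hfirst : s(u, p.snd) ∉ M.edgeSet) (hlast : s(p.penultimate, w) ∉ M.edgeSet) (x : V) :
    mdeg (fromEdgeSet (M.edgeSet ∆ {e | e ∈ p.edges})) x
      = mdeg M x + (if x = u then 1 else 0) + (if x = w then 1 else 0) := by
  have hcount := htrail.mdeg_fromEdgeSet_symmDiff_add M x
  have hsigned := p.countP_notMem_sub_countP_mem hp halt x
  simp only [edgeSign, hfirst, hlast, if_false] at hsigned
  split_ifs at hsigned ⊢ <;> omega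

end SimpleGraph

theorem symmDiff_degrees_general [Fintype V] (G M M' : SimpleGraph V) (k : ℕ)
    {u w : V} (p : G.Walk u w)
    (hP : IsAugTrail G M k p)
    (hM' : M' = SimpleGraph.fromEdgeSet (symmDiff M.edgeSet {e | e ∈ p.edges})) :
    (u ≠ w →
      mdeg M' u = mdeg M u + 1 ∧ mdeg M' w = mdeg M w + 1 ∧
        ∀ x : V, x ≠ u → x ≠ w → mdeg M' x = mdeg M x) ∧
    (u = w →
      mdeg M' u = mdeg M u + 2 ∧ ∀ x : V, x ≠ u → mdeg M' x = mdeg M x) := by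
  obtain ⟨⟨htrail, halt⟩, hne, hfirst, hlast, -⟩ := hP
  have hnil : ¬p.Nil := Walk.edges_eq_nil.not.mp hne
  have hdeg := Walk.mdeg_fromEdgeSet_symmDiff htrail hnil (List.isChain_iff_getElem.mpr halt)
    (hfirst _ (by rw [List.head?_eq_some_head hne, Walk.head_edges_eq_mk_start_snd]))
    (hlast _ (by
      rw [List.getLast?_eq_some_getLast hne, Walk.getLast_edges_eq_mk_penultimate_end]))
  subst hM'
  refine ⟨fun huw => ⟨?_, ?_, fun x hxu hxw => ?_⟩, fun huw => ⟨?_, fun x hxu => ?_⟩⟩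
  · simp [hdeg, huw]
  · simp [hdeg, huw.symm]
  · simp [hdeg, hxu, hxw]
  · simp [hdeg, ← huw]
  · simp [hdeg, hxu, ← huw]

/-- Degrees in `M' = M Δ P` for an `M`-augmenting trail `P` with endpoints
`u` and `w`: both endpoint degrees increase by one (by two if `u = w`), and all other
degrees are unchanged. -/
theorem symmDiff_degrees [Fintype V] (G M M' : SimpleGraph V) (k : ℕ) (hk : 1 ≤ k)
    (hM : IsKLimitedSpanning G M k) {u w : V} (p : G.Walk u w)
    (hP : IsAugTrail G M k p)
    (hM' : M' = SimpleGraph.fromEdgeSet (symmDiff M.edgeSet {e | e ∈ p.edges})) :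
    (u ≠ w →
      mdeg M' u = mdeg M u + 1 ∧ mdeg M' w = mdeg M w + 1 ∧
        ∀ x : V, x ≠ u → x ≠ w → mdeg M' x = mdeg M x) ∧
    (u = w →
      mdeg M' u = mdeg M u + 2 ∧ ∀ x : V, x ≠ u → mdeg M' x = mdeg M x) :=
  symmDiff_degrees_general G M M' k p hP hM'
end

section
/- Let G be a finite simple graph, k ≥ 1, F a k-factor of G, and M a k-limited spanning subgraph of G with σ(M) > 0. Let N be the spanning subgraph of G whose edge set is the symmetric difference E(F) Δ E(M). Then N has a connected component that either contains at least two distinct vertices that are unfilled in M, or contains a vertex v unfilled in M with deg_M(v) < k − 1. -/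
open SimpleGraph

variable {V : Type*}

section Aux

open scoped symmDiff

lemma card_symmDiff_zmod2 [DecidableEq V] (s t : Finset V) :
    (((s ∆ t).card : ZMod 2)) = (s.card : ZMod 2) + t.card := by
  have h1 : (s ∆ t).card + (s ∩ t).card = (s ∪ t).card := by
    rw [symmDiff_eq_sup_sdiff_inf]
    exact Finset.card_sdiff_add_card_eq_card (le_trans inf_le_left le_sup_left)
  have h2 := Finset.card_union_add_card_inter s t
  have h3 : (s ∆ t).card + 2 * (s ∩ t).card = s.card + t.card := by omega
  have h4 := congrArg (Nat.cast : ℕ → ZMod 2) h3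
  push_cast at h4
  have h5 : (2 : ZMod 2) = 0 := by decide
  rw [h5] at h4
  simpa using h4

lemma neighborSet_symmDiff' (F M N : SimpleGraph V)
    (hN : N = SimpleGraph.fromEdgeSet (symmDiff F.edgeSet M.edgeSet)) (v : V) :
    N.neighborSet v = (F.neighborSet v) ∆ (M.neighborSet v) := by
  subst hN
  ext w
  simp only [mem_neighborSet, fromEdgeSet_adj, Set.mem_symmDiff, SimpleGraph.mem_edgeSet]
  constructor
  · rintro ⟨h, -⟩; exact h
  · intro h
    refine ⟨h, ?_⟩
    rcases h with ⟨h1, -⟩ | ⟨h1, -⟩ <;> exact h1.ne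

lemma mdeg_parity [Fintype V] (F M N : SimpleGraph V) (k : ℕ) (hF : ∀ v, mdeg F v = k)
    (hNn : ∀ v, N.neighborSet v = (F.neighborSet v) ∆ (M.neighborSet v)) (v : V) :
    (mdeg N v : ZMod 2) = (k : ZMod 2) + (mdeg M v : ZMod 2) := by
  classical
  have h1 : mdeg N v = ((F.neighborSet v).toFinset ∆ (M.neighborSet v).toFinset).card := by
    rw [mdeg, hNn v, Set.ncard_eq_toFinset_card', Set.toFinset_symmDiff]
  have h2 : (F.neighborSet v).toFinset.card = k := by
    rw [← Set.ncard_eq_toFinset_card']; exact hF v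
  have h3 : (M.neighborSet v).toFinset.card = mdeg M v := by
    rw [← Set.ncard_eq_toFinset_card']; rfl
  rw [h1, card_symmDiff_zmod2, h2, h3]

lemma handshake_zmod2 [Fintype V] (N : SimpleGraph V) (s : Finset V)
    (hs : ∀ v ∈ s, ∀ w, N.Adj v w → w ∈ s) :
    ∑ v ∈ s, (mdeg N v : ZMod 2) = 0 := by
  classical
  have hdeg : ∀ v ∈ s, (mdeg N v : ZMod 2) = ∑ w ∈ s, if N.Adj v w then (1 : ZMod 2) else 0 := by
    intro v hv
    have h1 : (N.neighborSet v).toFinset = s.filter (fun w => N.Adj v w) := by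
      ext w
      simp only [Set.mem_toFinset, mem_neighborSet, Finset.mem_filter]
      exact ⟨fun h => ⟨hs v hv w h, h⟩, fun h => h.2⟩
    rw [mdeg, Set.ncard_eq_toFinset_card', h1, ← Finset.sum_boole]
  rw [Finset.sum_congr rfl hdeg, ← Finset.sum_product']
  refine Finset.sum_involution (fun p _ => p.swap) ?_ ?_ ?_ ?_
  · intro p _
    have : (if N.Adj p.swap.1 p.swap.2 then (1 : ZMod 2) else 0)
        = (if N.Adj p.1 p.2 then (1 : ZMod 2) else 0) := by
      simp [Prod.swap, N.adj_comm]
    rw [this]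
    exact CharTwo.add_self_eq_zero _
  · intro p _ hp hswap
    have hadj : N.Adj p.1 p.2 := by by_contra h; simp [h] at hp
    have := hadj.ne
    apply this
    have := congrArg Prod.fst hswap
    simpa [Prod.swap] using this.symm
  · intro p hp
    simp only [Finset.mem_product] at hp ⊢
    exact ⟨hp.2, hp.1⟩
  · intro p _; simp

end Aux

/-- If `F` is a `k`-factor, `M` a `k`-limited spanning subgraph with
`σ(M) > 0`, and `N = F Δ M`, then some connected component of `N` contains either two
distinct unfilled vertices of `M`, or an unfilled vertex `v` with `deg_M v < k − 1`. -/
theorem component_with_unfilled [Fintype V] (G F M N : SimpleGraph V) (k : ℕ) (hk : 1 ≤ k)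
    (hF : IsKFactor G F k) (hM : IsKLimitedSpanning G M k) (hσ : 0 < sigmaDef M k)
    (hN : N = SimpleGraph.fromEdgeSet (symmDiff F.edgeSet M.edgeSet)) :
    ∃ C : N.ConnectedComponent,
      (∃ a b : V, a ∈ C.supp ∧ b ∈ C.supp ∧ a ≠ b ∧ mdeg M a < k ∧ mdeg M b < k) ∨
      (∃ v : V, v ∈ C.supp ∧ mdeg M v < k ∧ mdeg M v < k - 1) := by
  classical
  obtain ⟨u, hu⟩ : ∃ u, mdeg M u < k := by
    by_contra h
    push_neg at h
    have : sigmaDef M k = 0 :=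
      Finset.sum_eq_zero fun v _ => Nat.sub_eq_zero_of_le (h v)
    omega
  have humem : u ∈ (N.connectedComponentMk u).supp :=
    (ConnectedComponent.mem_supp_iff _ _).2 rfl
  by_cases hcase : mdeg M u < k - 1
  · exact ⟨N.connectedComponentMk u, Or.inr ⟨u, humem, hu, hcase⟩⟩
  · have hu' : mdeg M u = k - 1 := by omega
    refine ⟨N.connectedComponentMk u, Or.inl ?_⟩
    by_contra hcon
    push_neg at hcon
    have hfill : ∀ v ∈ (N.connectedComponentMk u).supp, v ≠ u → mdeg M v = k := by
      intro v hv hvu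
      by_contra h
      exact absurd (hcon u v humem hv (Ne.symm hvu) hu)
        (Nat.not_le.2 (lt_of_le_of_ne (hM.2 v) h))
    set s : Finset V := (N.connectedComponentMk u).supp.toFinset with hs
    have hclosed : ∀ v ∈ s, ∀ w, N.Adj v w → w ∈ s := by
      intro v hv w hvw
      rw [hs, Set.mem_toFinset, ConnectedComponent.mem_supp_iff] at hv ⊢
      rw [← hv]
      exact ConnectedComponent.eq.2 hvw.symm.reachable
    have hsum0 : ∑ v ∈ s, (mdeg N v : ZMod 2) = 0 := handshake_zmod2 N s hclosed
    have hus : u ∈ s := by rw [hs, Set.mem_toFinset]; exact humem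
    have hNn := neighborSet_symmDiff' F M N hN
    have hsum1 : ∑ v ∈ s, (mdeg N v : ZMod 2) = 1 := by
      rw [Finset.sum_congr rfl (fun v _ => mdeg_parity F M N k hF.2 hNn v)]
      rw [Finset.sum_eq_single u]
      · rw [hu']
        have h1 : ((k - 1 : ℕ) : ZMod 2) = (k : ZMod 2) - 1 := by
          push_cast [Nat.cast_sub hk]; ring
        rw [h1]
        have h2 : (k : ZMod 2) + (k : ZMod 2) = 0 := CharTwo.add_self_eq_zero _
        have h3 : (0 : ZMod 2) - 1 = 1 := by decide
        calc (k : ZMod 2) + ((k : ZMod 2) - 1)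
            = ((k : ZMod 2) + (k : ZMod 2)) - 1 := by ring
          _ = 0 - 1 := by rw [h2]
          _ = 1 := h3
      · intro v hvs hvu
        rw [hfill v (by rwa [hs, Set.mem_toFinset] at hvs) hvu]
        exact CharTwo.add_self_eq_zero _
      · intro h; exact absurd hus h
    rw [hsum0] at hsum1
    exact absurd hsum1 (by decide)
end

section
/- Let G be a finite simple graph, k ≥ 1, M a k-limited spanning subgraph of G, and P = v0 e1 v1 … e_n v_n an M-augmenting trail. Suppose v_i = v_j for some 0 ≤ i < j ≤ n with j − i even. Then the walk obtained from P by deleting the segment between the i-th and j-th vertex visits (i.e., v0 e1 … v_i e_{j+1} v_{j+1} … e_n v_n) is again an M-augmenting trail, of strictly smaller length. -/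
open SimpleGraph

variable {V : Type*}

/-- The initial segment of a walk, consisting of its first `n` edges. -/
def walkTake {G : SimpleGraph V} : {u v : V} → (p : G.Walk u v) → (n : ℕ) →
    G.Walk u (p.getVert n)
  | _, _, SimpleGraph.Walk.nil, _ => SimpleGraph.Walk.nil
  | _, _, SimpleGraph.Walk.cons _ _, 0 => SimpleGraph.Walk.nil
  | _, _, SimpleGraph.Walk.cons h q, n + 1 => SimpleGraph.Walk.cons h (walkTake q n)

/-- The final segment of a walk, obtained by deleting its first `n` edges. -/
def walkDrop {G : SimpleGraph V} : {u v : V} → (p : G.Walk u v) → (n : ℕ) →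
    G.Walk (p.getVert n) v
  | _, _, SimpleGraph.Walk.nil, _ => SimpleGraph.Walk.nil
  | _, _, SimpleGraph.Walk.cons h q, 0 => SimpleGraph.Walk.cons h q
  | _, _, SimpleGraph.Walk.cons _ q, n + 1 => walkDrop q n

/-!
Because the first edge of an augmenting trail lies outside `M` and the edges alternate, an edge
lies in `M` exactly when its position is odd, and the last edge outside `M` forces odd length.
Cutting out a closed segment of even length preserves both facts, so the shortcut alternates
with first and last edge outside `M`. Its edges form a sublist of the edges of `P`, hence are
distinct; its endpoints are those of `P`, and its inner vertices are inner vertices of `P`.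
-/

/-- The edge pattern of an augmenting trail: outside, inside, outside, …, outside `S`. -/
def IsAugPattern {α : Type*} (S : Set α) (l : List α) : Prop :=
  Odd l.length ∧ ∀ t (h : t < l.length), l[t] ∈ S ↔ Odd t

namespace IsAugPattern

variable {α : Type*} {S : Set α} {l : List α}

theorem iff_alternating :
    IsAugPattern S l ↔ (∀ t (h : t + 1 < l.length), l[t] ∈ S ↔ l[t + 1] ∉ S) ∧ l ≠ [] ∧
      (∀ e, l.head? = some e → e ∉ S) ∧ (∀ e, l.getLast? = some e → e ∉ S) := by
  constructor
  · rintro ⟨hlen, hpar⟩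
    have hpos : 0 < l.length := hlen.pos
    refine ⟨fun t h ↦ ?_, List.ne_nil_of_length_pos hpos, ?_, ?_⟩
    · rw [hpar, hpar, Nat.odd_add_one, not_not]
    · rw [List.head?_eq_getElem?, List.getElem?_eq_getElem hpos]
      rintro e ⟨⟩
      simp [hpar]
    · rw [List.getLast?_eq_getElem?, List.getElem?_eq_getElem (by omega)]
      rintro e ⟨⟩
      rw [Nat.odd_iff] at hlen
      rw [hpar, Nat.odd_iff]
      omega
  · rintro ⟨halt, hne, hhead, hlast⟩
    have hpar : ∀ t (h : t < l.length), l[t] ∈ S ↔ Odd t := by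
      intro t
      induction t with
      | zero =>
        intro h
        exact iff_of_false (hhead _ (by rw [List.head?_eq_getElem?, List.getElem?_eq_getElem h]))
          (by simp)
      | succ t ih =>
        intro h
        rw [Nat.odd_add_one, ← ih (by omega), halt t h, not_not]
    refine ⟨?_, hpar⟩
    have hpos : 0 < l.length := List.length_pos_iff.mpr hne
    have hlt : l.length - 1 < l.length := by omega
    have := mt (hpar _ hlt).mpr
      (hlast _ (by rw [List.getLast?_eq_getElem?, List.getElem?_eq_getElem hlt]))
    rw [Nat.odd_iff] at this ⊢
    omega

theorem take_append_drop (hl : IsAugPattern S l) {i j : ℕ} (hij : i ≤ j) (hj : j ≤ l.length)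
    (heven : Even (j - i)) : IsAugPattern S (l.take i ++ l.drop j) := by
  obtain ⟨hlen, hpar⟩ := hl
  rw [Nat.even_iff] at heven
  rw [Nat.odd_iff] at hlen
  have hlen' : (l.take i ++ l.drop j).length = i + (l.length - j) := by
    simp only [List.length_append, List.length_take, List.length_drop]
    omega
  refine ⟨by rw [hlen', Nat.odd_iff]; omega, fun t h ↦ ?_⟩
  rw [hlen'] at h
  rw [List.getElem_append]
  split_ifs with ht
  · rw [List.getElem_take, hpar]
  · rw [List.getElem_drop, hpar, Nat.odd_iff, Nat.odd_iff]
    simp only [List.length_take] at ht ⊢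
    omega

end IsAugPattern

namespace SimpleGraph.Walk

variable {G : SimpleGraph V}

theorem walkTake_eq_take {u v : V} (p : G.Walk u v) (n : ℕ) : walkTake p n = p.take n := by
  induction p generalizing n with
  | nil => rfl
  | cons h q ih => cases n with
    | zero => rfl
    | succ n => simp [walkTake, take, ih]

theorem walkDrop_eq_drop {u v : V} (p : G.Walk u v) (n : ℕ) : walkDrop p n = p.drop n := by
  induction p generalizing n with
  | nil => rfl
  | cons h q ih => cases n with
    | zero => rfl
    | succ n => simp [walkDrop, drop, ih]

theorem mem_support_tail_dropLast_iff {u v x : V} (p : G.Walk u v) :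
    x ∈ p.support.tail.dropLast ↔ ∃ t, 0 < t ∧ t < p.length ∧ p.getVert t = x := by
  simp only [List.mem_iff_getElem, List.getElem_dropLast, List.getElem_tail,
    List.length_dropLast, List.length_tail, length_support]
  constructor
  · rintro ⟨m, hm, rfl⟩
    exact ⟨m + 1, by omega, by omega, (p.getVert_eq_support_getElem (by omega))⟩
  · rintro ⟨t, ht0, ht, rfl⟩
    refine ⟨t - 1, by omega, ?_⟩
    rw [p.getVert_eq_support_getElem (by omega)]
    congr 1
    omega

section Shortcut

variable {u w : V} (p : G.Walk u w) {i j : ℕ} (heq : p.getVert i = p.getVert j)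

theorem edges_shortcut :
    ((walkTake p i).append ((walkDrop p j).copy heq.symm rfl)).edges =
      p.edges.take i ++ p.edges.drop j := by
  rw [edges_append, edges_copy, walkTake_eq_take, walkDrop_eq_drop, edges_take, edges_drop]

theorem getVert_shortcut (hi : i ≤ p.length) (t : ℕ) :
    ((walkTake p i).append ((walkDrop p j).copy heq.symm rfl)).getVert t =
      if t < i then p.getVert t else p.getVert (j + (t - i)) := by
  simp only [getVert_append, getVert_copy, walkTake_eq_take, walkDrop_eq_drop, take_length,
    take_getVert, drop_getVert, Nat.min_eq_left hi]
  split_ifs with ht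
  · rw [Nat.min_eq_right ht.le]
  · rfl

end Shortcut

end SimpleGraph.Walk

theorem shortcut_augTrail_general (G M : SimpleGraph V) (k : ℕ) {u w : V} (p : G.Walk u w)
    (hP : IsAugTrail G M k p) (i j : ℕ) (hij : i < j) (hj : j ≤ p.length)
    (heven : Even (j - i)) (heq : p.getVert i = p.getVert j) :
    IsAugTrail G M k ((walkTake p i).append ((walkDrop p j).copy heq.symm rfl)) ∧
      ((walkTake p i).append ((walkDrop p j).copy heq.symm rfl)).length < p.length := by
  obtain ⟨⟨htrail, halt⟩, hne, hhead, hlast, hu, hw, hinner, hclosed⟩ := hP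
  have hpat : IsAugPattern M.edgeSet p.edges :=
    IsAugPattern.iff_alternating.mpr ⟨halt, hne, hhead, hlast⟩
  have hpat' := hpat.take_append_drop hij.le (by simpa using hj) heven
  rw [← Walk.edges_shortcut p heq] at hpat'
  obtain ⟨halt', hne', hhead', hlast'⟩ := IsAugPattern.iff_alternating.mp hpat'
  have hlen : ((walkTake p i).append ((walkDrop p j).copy heq.symm rfl)).length =
      i + (p.length - j) := by
    rw [← Walk.length_edges, Walk.edges_shortcut p heq]
    simp only [List.length_append, List.length_take, List.length_drop, Walk.length_edges]
    omega
  refine ⟨⟨⟨?_, halt'⟩, hne', hhead', hlast', hu, hw, ?_, hclosed⟩, by omega⟩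
  · rw [Walk.isTrail_def, Walk.edges_shortcut p heq, ← Nat.add_sub_cancel' hij.le,
      ← List.dropSlice_eq]
    exact (List.dropSlice_sublist _ _ _).nodup htrail.edges_nodup
  · intro x hx
    obtain ⟨t, ht0, ht, rfl⟩ := (Walk.mem_support_tail_dropLast_iff _).mp hx
    rw [Walk.getVert_shortcut p heq (by omega)]
    refine hinner _ ((Walk.mem_support_tail_dropLast_iff p).mpr ?_)
    split_ifs with hti
    · exact ⟨t, ht0, by omega, rfl⟩
    · exact ⟨j + (t - i), by omega, by omega, rfl⟩

/-- If an `M`-augmenting trail `P = v₀ e₁ v₁ … e_n v_n` has a repeated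
vertex visit `v_i = v_j` with `i < j ≤ n` and `j − i` even, then the walk obtained by
deleting the segment between the `i`-th and `j`-th vertex visits is again an
`M`-augmenting trail, of strictly smaller length. -/
theorem shortcut_augTrail [Fintype V] (G M : SimpleGraph V) (k : ℕ) (hk : 1 ≤ k)
    (hM : IsKLimitedSpanning G M k) {u w : V} (p : G.Walk u w)
    (hP : IsAugTrail G M k p) (i j : ℕ) (hij : i < j) (hj : j ≤ p.length)
    (heven : Even (j - i)) (heq : p.getVert i = p.getVert j) :
    IsAugTrail G M k ((walkTake p i).append ((walkDrop p j).copy heq.symm rfl)) ∧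
      ((walkTake p i).append ((walkDrop p j).copy heq.symm rfl)).length < p.length :=
  shortcut_augTrail_general G M k p hP i j hij hj heven heq
end

section
/- (Claim 3.1) Let G be a finite simple bipartite graph (i.e., G is 2-colorable), k ≥ 1, and M a k-limited spanning subgraph of G. Then every M-augmenting trail of minimum length among all M-augmenting trails in G is a path, i.e., visits no vertex more than once. -/
open SimpleGraph

variable {V : Type*}

/-!
Along an augmenting trail the `M`-edges are exactly those at odd positions, and the last edge is
not in `M`, so the trail has odd length; in a bipartite graph it is therefore not closed.
If the trail revisits a vertex, it contains a closed subwalk, of even length since the graph is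
bipartite. Cutting it out shifts the positions of the later edges by an even number and keeps
the endpoints, and every inner vertex of the result is an inner vertex of the original trail, so
the result is a shorter augmenting trail.
-/

theorem List.Sublist.dropLast {α : Type*} {l₁ l₂ : List α} (h : l₁.Sublist l₂) :
    l₁.dropLast.Sublist l₂.dropLast := by
  have h' := h.reverse.tail
  rwa [List.tail_reverse, List.tail_reverse, List.reverse_sublist] at h'

def AlternatesFromOutside {α : Type*} (S : Set α) (l : List α) : Prop :=
  ∀ i (h : i < l.length), l[i] ∈ S ↔ Odd i

section AlternatesFromOutside

variable {α : Type*} {S : Set α} {l : List α}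

theorem alternatesFromOutside_iff :
    AlternatesFromOutside S l ↔
      (∀ i (h : i + 1 < l.length), (l[i] ∈ S ↔ l[i + 1] ∉ S)) ∧
        ∀ e, l.head? = some e → e ∉ S := by
  constructor
  · intro h
    refine ⟨fun i hi => by rw [h i, h (i + 1), Nat.odd_add_one, not_not], fun e he => ?_⟩
    rw [List.head?_eq_getElem?, List.getElem?_eq_some_iff] at he
    obtain ⟨h0, rfl⟩ := he
    simpa using h 0 h0
  · rintro ⟨halt, hhead⟩ i
    induction i with
    | zero =>
      intro h0
      simpa using hhead _ (List.head?_eq_getElem? ▸ List.getElem?_eq_getElem h0)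
    | succ i ih =>
      intro hi
      rw [Nat.odd_add_one, ← ih (by omega), halt i hi, not_not]

theorem AlternatesFromOutside.forall_getLast?_notMem_iff (h : AlternatesFromOutside S l)
    (hl : l ≠ []) : (∀ e, l.getLast? = some e → e ∉ S) ↔ Odd l.length := by
  have hpos : 0 < l.length := List.length_pos_iff.mpr hl
  have hlast : l.getLast? = some l[l.length - 1] := by
    rw [List.getLast?_eq_getElem?, List.getElem?_eq_getElem]
  simp only [hlast, Option.some.injEq, forall_eq', h _ (by omega : l.length - 1 < l.length),
    Nat.odd_iff]
  omega

theorem AlternatesFromOutside.append_of_even {A D C : List α}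
    (h : AlternatesFromOutside S (A ++ D ++ C)) (hD : Even D.length) :
    AlternatesFromOutside S (A ++ C) := by
  intro i hi
  rw [List.length_append] at hi
  by_cases hiA : i < A.length
  · simpa [List.getElem_append_left hiA] using h i (by simp; omega)
  · have := h (i + D.length) (by simp; omega)
    rw [List.getElem_append_right (by simp; omega)] at this
    rw [List.getElem_append_right (by omega)]
    simp only [List.length_append, show i + D.length - (A.length + D.length) = i - A.length by omega]
      at this
    simpa [Nat.odd_add, hD] using this

end AlternatesFromOutside

namespace SimpleGraph.Walk

variable {G : SimpleGraph V}

theorem exists_eq_append_append_of_not_isPath {u w : V} (p : G.Walk u w) (hp : ¬p.IsPath) :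
    ∃ (v : V) (q : G.Walk u v) (c : G.Walk v v) (r : G.Walk v w),
      0 < c.length ∧ p = q.append (c.append r) := by
  classical
  induction p with
  | nil => exact absurd IsPath.nil hp
  | @cons u x w h p ih =>
    by_cases hpath : p.IsPath
    · have hu : u ∈ p.support := by
        by_contra hu
        exact hp ((cons_isPath_iff h p).mpr ⟨hpath, hu⟩)
      refine ⟨u, nil, cons h (p.takeUntil u hu), p.dropUntil u hu, by simp, ?_⟩
      simp [p.take_spec hu]
    · obtain ⟨v, q, c, r, hc, rfl⟩ := ih hpath
      exact ⟨v, cons h q, c, r, hc, rfl⟩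

variable {u v w : V} (q : G.Walk u v) (c : G.Walk v v) (r : G.Walk v w)

theorem edges_append_sublist_edges_append_append :
    (q.append r).edges.Sublist (q.append (c.append r)).edges := by
  simp only [edges_append]
  exact (List.sublist_append_right _ _).append_left _

theorem support_append_sublist_support_append_append :
    (q.append r).support.Sublist (q.append (c.append r)).support := by
  simp only [support_append, List.tail_append_of_ne_nil c.support_ne_nil]
  exact (List.sublist_append_right _ _).append_left _

end SimpleGraph.Walk

namespace IsAugTrail

open Walk

variable {G M : SimpleGraph V} {k : ℕ} {u v w : V}

theorem alternatesFromOutside {p : G.Walk u w} (hp : IsAugTrail G M k p) :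
    AlternatesFromOutside M.edgeSet p.edges :=
  alternatesFromOutside_iff.mpr ⟨hp.1.2, hp.2.2.1⟩

theorem odd_length {p : G.Walk u w} (hp : IsAugTrail G M k p) : Odd p.length := by
  rw [← p.length_edges]
  exact (hp.alternatesFromOutside.forall_getLast?_notMem_iff hp.2.1).mp hp.2.2.2.1

theorem ne_of_colorable_two (hG : G.Colorable 2) {p : G.Walk u w} (hp : IsAugTrail G M k p) :
    u ≠ w := by
  rintro rfl
  exact Nat.not_even_iff_odd.mpr hp.odd_length (two_colorable_iff_forall_loop_even.mp hG u p)

theorem append_of_append_append (hG : G.Colorable 2) {q : G.Walk u v} {c : G.Walk v v}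
    {r : G.Walk v w} (hp : IsAugTrail G M k (q.append (c.append r))) :
    IsAugTrail G M k (q.append r) := by
  have huw := hp.ne_of_colorable_two hG
  have hc : Even c.length := two_colorable_iff_forall_loop_even.mp hG v c
  have halt : AlternatesFromOutside M.edgeSet (q.append r).edges := by
    have h := hp.alternatesFromOutside
    rw [edges_append, edges_append, ← List.append_assoc] at h
    rw [edges_append]
    exact h.append_of_even (by rwa [length_edges])
  have hodd : Odd (q.append r).edges.length := by
    have h := hp.odd_length
    simp only [length_edges, length_append, Nat.odd_iff] at h ⊢
    rw [Nat.even_iff] at hc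
    omega
  have hne : (q.append r).edges ≠ [] := fun h => huw (eq_of_length_eq_zero (by
    rw [← length_edges, h, List.length_nil]))
  obtain ⟨⟨htrail, -⟩, -, -, -, hu, hw, hfilled, -⟩ := hp
  obtain ⟨halternating, hhead⟩ := alternatesFromOutside_iff.mp halt
  refine ⟨⟨⟨(edges_append_sublist_edges_append_append q c r).nodup htrail.edges_nodup⟩,
    halternating⟩, hne, hhead, (halt.forall_getLast?_notMem_iff hne).mpr hodd, hu, hw,
    fun x hx => hfilled x ?_, fun h => absurd h huw⟩
  exact (support_append_sublist_support_append_append q c r).tail.dropLast.subset hx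

end IsAugTrail

theorem min_augTrail_isPath_of_bipartite_general (G M : SimpleGraph V) (k : ℕ)
    (hbip : G.Colorable 2) {u w : V}
    (p : G.Walk u w) (hP : IsAugTrail G M k p)
    (hmin : ∀ (a b : V) (q : G.Walk a b), IsAugTrail G M k q → p.length ≤ q.length) :
    p.IsPath := by
  by_contra hpath
  obtain ⟨v, q, c, r, hc, rfl⟩ := p.exists_eq_append_append_of_not_isPath hpath
  have hshorter := hmin u w _ (hP.append_of_append_append hbip)
  simp only [Walk.length_append] at hshorter
  omega

/-- Claim 3.1: In a bipartite (2-colorable) graph, every `M`-augmenting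
trail of minimum length among all `M`-augmenting trails is a path. -/
theorem min_augTrail_isPath_of_bipartite [Fintype V] (G M : SimpleGraph V) (k : ℕ)
    (hk : 1 ≤ k) (hbip : G.Colorable 2) (hM : IsKLimitedSpanning G M k) {u w : V}
    (p : G.Walk u w) (hP : IsAugTrail G M k p)
    (hmin : ∀ (a b : V) (q : G.Walk a b), IsAugTrail G M k q → p.length ≤ q.length) :
    p.IsPath :=
  min_augTrail_isPath_of_bipartite_general G M k hbip p hP hmin
end

section
/- (Theorem 3.1) Let G be a finite simple bipartite graph (i.e., G is 2-colorable) and k ≥ 1. Then G has a k-factor if and only if for every k-limited spanning subgraph M of G with σ(M) > 0 there exists an M-augmenting trail in G that is a path (visits no vertex more than once). -/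
open SimpleGraph

variable {V : Type*}

/-! Augmenting along an `M`-augmenting path `p`, i.e. replacing `M` by `M ∆ p`, raises the degree
of the two (distinct, unfilled) ends of `p` by one and leaves every other degree unchanged, so it
lowers `σ`; starting from the empty graph one reaches `σ = 0`, a `k`-factor.

Conversely, given a `k`-factor, a double counting argument produces an alternating walk of odd
length, starting and ending outside `M`, between two unfilled vertices. Take a shortest one. An
unfilled inner vertex would cut off a shorter such walk. In a bipartite graph two visits of the same
vertex are an even number of steps apart, so the closed piece between them can be cut out,
again giving a shorter walk: the shortest walk is an augmenting path. -/

section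

open Finset
open scoped symmDiff

lemma mdeg_eq_degree (H : SimpleGraph V) (v : V) [Fintype (H.neighborSet v)] :
    mdeg H v = H.degree v := by
  rw [mdeg, Set.ncard_eq_toFinset_card', ← card_neighborSet_eq_degree, Set.toFinset_card]

lemma mdeg_sdiff_add_mdeg [Finite V] (H K : SimpleGraph V) (v : V) :
    mdeg (H \ K) v + mdeg K v = mdeg (K \ H) v + mdeg H v := by
  simp only [mdeg, neighborSet_sdiff]
  rw [Set.ncard_sdiff_add_ncard, Set.ncard_sdiff_add_ncard, Set.union_comm]

lemma SimpleGraph.sum_degree_le_of_forall_adj_mem [Fintype V] (H : SimpleGraph V)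
    [DecidableRel H.Adj] {s t : Finset V} (hst : ∀ x ∈ s, ∀ y, H.Adj x y → y ∈ t) :
    ∑ x ∈ s, H.degree x ≤ ∑ y ∈ t, H.degree y :=
  calc ∑ x ∈ s, H.degree x = ∑ x ∈ s, #(t.bipartiteAbove H.Adj x) := by
        refine sum_congr rfl fun x hx => ?_
        rw [← card_neighborFinset_eq_degree]
        congr 1
        ext y
        simpa using fun hxy => hst x hx y hxy
    _ = ∑ y ∈ t, #(s.bipartiteBelow H.Adj y) :=
        sum_card_bipartiteAbove_eq_sum_card_bipartiteBelow _
    _ ≤ ∑ y ∈ t, H.degree y := by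
        refine sum_le_sum fun y _ => ?_
        rw [← card_neighborFinset_eq_degree]
        exact card_le_card fun x hx => by
          simpa [adj_comm] using ((mem_bipartiteBelow _).1 hx).2

lemma SimpleGraph.neighborSet_symmDiff (M P : SimpleGraph V) (v : V) :
    (M ∆ P).neighborSet v = M.neighborSet v ∆ P.neighborSet v := by
  ext w
  simp [symmDiff_def]

section SymmDiff

variable {M P : SimpleGraph V} {v : V}

lemma mdeg_symmDiff_of_neighborSet_eq_empty (h : P.neighborSet v = ∅) :
    mdeg (M ∆ P) v = mdeg M v := by
  rw [mdeg, neighborSet_symmDiff, h, ← Set.bot_eq_empty, symmDiff_bot, mdeg]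

lemma mdeg_symmDiff_of_neighborSet_eq_pair {w x : V} (h : P.neighborSet v = {w, x})
    (hw : M.Adj v w) (hx : ¬M.Adj v x) : mdeg (M ∆ P) v = mdeg M v := by
  have : M.neighborSet v ∆ {w, x} = insert x (M.neighborSet v \ {w}) := by
    ext y
    by_cases hyw : y = w <;> by_cases hyx : y = x <;> simp_all [Set.mem_symmDiff]
  rw [mdeg, neighborSet_symmDiff, h, this,
    Set.ncard_exchange (show x ∉ M.neighborSet v from hx) hw, mdeg]

lemma mdeg_symmDiff_of_neighborSet_eq_singleton [Finite V] {w : V} (h : P.neighborSet v = {w})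
    (hw : ¬M.Adj v w) : mdeg (M ∆ P) v = mdeg M v + 1 := by
  have : M.neighborSet v ∆ {w} = insert w (M.neighborSet v) := by
    ext x
    by_cases hx : x = w <;> simp [Set.mem_symmDiff, hx, hw]
  rw [mdeg, neighborSet_symmDiff, h, this,
    Set.ncard_insert_of_notMem (show w ∉ M.neighborSet v from hw), mdeg]

end SymmDiff

variable {G M : SimpleGraph V} {k : ℕ}

/-- Positions are counted from `0`, so the first edge lies outside `M`. -/
def IsAltWalk (M : SimpleGraph V) {u v : V} (p : G.Walk u v) : Prop :=
  ∀ i < p.length, (M.Adj (p.getVert i) (p.getVert (i + 1)) ↔ Odd i)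

/-- An `M`-augmenting trail without the trail and filled-interior conditions; `Odd p.length`
says that the last edge, like the first, lies outside `M`. -/
structure IsAugWalk (M : SimpleGraph V) (k : ℕ) {u v : V} (p : G.Walk u v) : Prop where
  isAltWalk : IsAltWalk M p
  odd_length : Odd p.length
  mdeg_start_lt : mdeg M u < k
  mdeg_end_lt : mdeg M v < k

namespace IsAltWalk

variable {u v u' v' : V} {p : G.Walk u v}

lemma of_getVert_eq (hp : IsAltWalk M p) {q : G.Walk u' v'} (f : ℕ → ℕ)
    (hf : ∀ i < q.length, f i < p.length ∧ q.getVert i = p.getVert (f i) ∧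
      q.getVert (i + 1) = p.getVert (f i + 1) ∧ (Odd (f i) ↔ Odd i)) :
    IsAltWalk M q := fun i hi => by
  obtain ⟨hfi, h, h', hodd⟩ := hf i hi
  rw [h, h', hp _ hfi, hodd]

lemma take (hp : IsAltWalk M p) (n : ℕ) : IsAltWalk M (p.take n) :=
  hp.of_getVert_eq (fun i => i) fun i hi => by
    rw [Walk.take_length] at hi
    refine ⟨by omega, ?_, ?_, Iff.rfl⟩ <;> rw [Walk.take_getVert, min_eq_right (by omega)]

lemma drop (hp : IsAltWalk M p) {n : ℕ} (hn : Even n) : IsAltWalk M (p.drop n) :=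
  hp.of_getVert_eq (n + ·) fun i hi => by
    rw [Walk.drop_length] at hi
    exact ⟨by omega, Walk.drop_getVert .., Walk.drop_getVert .., by simp [Nat.odd_add', hn]⟩

lemma splice (hp : IsAltWalk M p) {i j : ℕ} (hij : i ≤ j) (hj : j ≤ p.length)
    (hji : Even (j - i)) (h : p.getVert i = p.getVert j) :
    IsAltWalk M ((p.take i).append ((p.drop j).copy h.symm rfl)) := by
  have hi : min i p.length = i := min_eq_left (hij.trans hj)
  have hget : ∀ n, ((p.take i).append ((p.drop j).copy h.symm rfl)).getVert n =
      p.getVert (if n < i then n else n + (j - i)) := by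
    intro n
    rw [Walk.getVert_append, Walk.take_length, hi]
    split_ifs
    · rw [Walk.take_getVert, min_eq_right (by omega)]
    · rw [Walk.getVert_copy, Walk.drop_getVert]
      congr 1
      omega
  refine hp.of_getVert_eq _ fun n hn => ⟨?_, hget n, ?_, ?_⟩
  · rw [Walk.length_append, Walk.take_length, Walk.length_copy, Walk.drop_length, hi] at hn
    split_ifs <;> omega
  · rw [hget]
    split_ifs <;> first
      | rfl
      | (congr 1; omega)
      | (rw [show n + 1 + (j - i) = j by omega, ← h]; congr 1; omega)
  · split_ifs
    · rfl
    · simp [Nat.odd_add, hji]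

lemma concat (hp : IsAltWalk M p) {w : V} (h : G.Adj v w) (hvw : M.Adj v w ↔ Odd p.length) :
    IsAltWalk M (p.concat h) := by
  intro i hi
  rw [Walk.length_concat] at hi
  simp only [Walk.concat_eq_append, Walk.getVert_append']
  rcases Nat.lt_or_ge i p.length with hi' | hi'
  · simpa [hi'.le, Nat.succ_le_of_lt hi'] using hp i hi'
  · obtain rfl : i = p.length := by omega
    simpa using hvw

end IsAltWalk

lemma SimpleGraph.Walk.even_sub_of_getVert_eq (hbip : G.Colorable 2) {u v : V} (p : G.Walk u v)
    {i j : ℕ} (hij : i ≤ j) (hj : j ≤ p.length) (h : p.getVert i = p.getVert j) :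
    Even (j - i) := by
  have hend : (p.drop i).getVert (j - i) = p.getVert i := by
    rw [Walk.drop_getVert, Nat.add_sub_cancel' hij, h]
  have := two_colorable_iff_forall_loop_even.mp hbip _ (((p.drop i).take (j - i)).copy rfl hend)
  rwa [Walk.length_copy, Walk.take_length, Walk.drop_length, min_eq_left (by omega)] at this

namespace IsAugWalk

variable {a b : V} {p : G.Walk a b}

lemma take (hp : IsAugWalk M k p) {i : ℕ} (hi : Odd i) (hiL : i ≤ p.length)
    (hdef : mdeg M (p.getVert i) < k) : IsAugWalk M k (p.take i) :=
  ⟨hp.isAltWalk.take i, by rwa [Walk.take_length, min_eq_left hiL], hp.mdeg_start_lt, hdef⟩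

lemma drop (hp : IsAugWalk M k p) {i : ℕ} (hi : Even i) (hiL : i ≤ p.length)
    (hdef : mdeg M (p.getVert i) < k) : IsAugWalk M k (p.drop i) :=
  ⟨hp.isAltWalk.drop hi, by rw [Walk.drop_length]; exact Nat.Odd.sub_even hiL hp.odd_length hi,
    hdef, hp.mdeg_end_lt⟩

lemma exists_splice (hp : IsAugWalk M k p) {i j : ℕ} (hij : i ≤ j) (hj : j ≤ p.length)
    (hji : Even (j - i)) (h : p.getVert i = p.getVert j) :
    ∃ q : G.Walk a b, IsAugWalk M k q ∧ q.length = p.length - (j - i) := by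
  refine ⟨(p.take i).append ((p.drop j).copy h.symm rfl),
    ⟨hp.isAltWalk.splice hij hj hji h, ?_, hp.mdeg_start_lt, hp.mdeg_end_lt⟩, ?_⟩ <;>
  rw [Walk.length_append, Walk.take_length, Walk.length_copy, Walk.drop_length,
    min_eq_left (hij.trans hj)]
  · rw [show i + (p.length - j) = p.length - (j - i) by omega]
    exact Nat.Odd.sub_even (by omega) hp.odd_length hji
  · omega

lemma mdeg_getVert_eq_of_minimal (hlim : ∀ v, mdeg M v ≤ k) (hp : IsAugWalk M k p)
    (hmin : ∀ (a' b' : V) (q : G.Walk a' b'), IsAugWalk M k q → p.length ≤ q.length) {i : ℕ}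
    (hi0 : 0 < i) (hiL : i < p.length) : mdeg M (p.getVert i) = k := by
  refine (hlim _).antisymm (not_lt.1 fun hdef => ?_)
  rcases Nat.even_or_odd i with hi | hi
  · have := hmin _ _ _ (hp.drop hi hiL.le hdef)
    rw [Walk.drop_length] at this
    omega
  · have := hmin _ _ _ (hp.take hi hiL.le hdef)
    rw [Walk.take_length] at this
    omega

lemma isPath_of_minimal (hbip : G.Colorable 2) (hp : IsAugWalk M k p)
    (hmin : ∀ (a' b' : V) (q : G.Walk a' b'), IsAugWalk M k q → p.length ≤ q.length) :
    p.IsPath := by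
  rw [← Walk.IsPath.getVert_injOn_iff]
  intro i hi j hj hij
  by_contra hne
  wlog hlt : i < j generalizing i j
  · exact this hj hi hij.symm (Ne.symm hne) (by omega)
  obtain ⟨q, hq, hqlen⟩ :=
    hp.exists_splice hlt.le hj (p.even_sub_of_getVert_eq hbip hlt.le hj hij) hij
  have : p.length ≤ p.length - (j - i) := hqlen ▸ hmin _ _ q hq
  simp only [Set.mem_ofPred_eq] at hj
  omega

end IsAugWalk

/-- Let `E` and `O` be the vertices reached from `u` by alternating walks of even and odd length.
If no vertex of `O` were unfilled, the edges of `F \ M` leaving `E` would all land in `O` and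
those of `M \ F` leaving `O` in `E`; since `deg_{F \ M} - deg_{M \ F} = k - deg_M` is zero on `O`
and positive at `u ∈ E`, double counting these edges gives a contradiction. -/
theorem exists_isAugWalk_of_isKFactor [Fintype V] {F : SimpleGraph V} (hF : IsKFactor G F k)
    (hM : IsKLimitedSpanning G M k) {u : V} (hu : mdeg M u < k) :
    ∃ (v : V) (p : G.Walk u v), IsAugWalk M k p := by
  classical
  by_contra! hnone
  set E := univ.filter fun x => ∃ p : G.Walk u x, IsAltWalk M p ∧ Even p.length
  set O := univ.filter fun x => ∃ p : G.Walk u x, IsAltWalk M p ∧ Odd p.length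
  have hO : ∀ y ∈ O, mdeg M y = k := fun y hy => (hM.2 y).antisymm <| not_lt.1 fun hlt => by
    obtain ⟨p, hp, hodd⟩ := (mem_filter.1 hy).2
    exact hnone y p ⟨hp, hodd, hu, hlt⟩
  have hEO : ∀ x ∈ E, ∀ y, (F \ M).Adj x y → y ∈ O := fun x hx y hxy => by
    obtain ⟨p, hp, heven⟩ := (mem_filter.1 hx).2
    refine mem_filter.2 ⟨mem_univ _, p.concat (hF.1 hxy.1), hp.concat _ ?_, ?_⟩
    · simpa [← Nat.not_even_iff_odd, heven] using hxy.2
    · simpa [Walk.length_concat] using heven.add_one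
  have hOE : ∀ y ∈ O, ∀ z, (M \ F).Adj y z → z ∈ E := fun y hy z hyz => by
    obtain ⟨p, hp, hodd⟩ := (mem_filter.1 hy).2
    refine mem_filter.2 ⟨mem_univ _, p.concat (hM.1 hyz.1), hp.concat _ ?_, ?_⟩
    · simpa [hodd] using hyz.1
    · simpa [Walk.length_concat] using hodd.add_one
  have huE : u ∈ E := mem_filter.2 ⟨mem_univ _, .nil, fun i hi => by simp at hi, .zero⟩
  have hdeg : ∀ v, (F \ M).degree v + mdeg M v = (M \ F).degree v + k := fun v => by
    rw [← mdeg_eq_degree, ← mdeg_eq_degree, ← hF.2 v]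
    exact mdeg_sdiff_add_mdeg F M v
  have := calc
    ∑ x ∈ E, (M \ F).degree x < ∑ x ∈ E, (F \ M).degree x :=
      sum_lt_sum (fun x _ => by have := hdeg x; have := hM.2 x; omega)
        ⟨u, huE, by have := hdeg u; omega⟩
    _ ≤ ∑ y ∈ O, (F \ M).degree y := sum_degree_le_of_forall_adj_mem _ hEO
    _ = ∑ y ∈ O, (M \ F).degree y :=
      sum_congr rfl fun y hy => by have := hdeg y; rw [hO y hy] at this; omega
    _ ≤ ∑ x ∈ E, (M \ F).degree x := sum_degree_le_of_forall_adj_mem _ hOE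
  exact lt_irrefl _ this

section Trail

variable {u v : V} {p : G.Walk u v}

lemma isAltTrail_and_head_notMem_iff :
    (IsAltTrail M p ∧ ∀ e, p.edges.head? = some e → e ∉ M.edgeSet) ↔
      p.IsTrail ∧ IsAltWalk M p := by
  simp only [IsAltTrail, Walk.getElem_edges, mem_edgeSet, Walk.length_edges,
    List.head?_eq_getElem?, List.getElem?_eq_some_iff, forall_exists_index,
    forall_apply_eq_imp_iff, zero_add, and_assoc]
  refine and_congr_right fun _ => ⟨fun ⟨halt, h0⟩ i => ?_, fun hp => ?_⟩
  · induction i with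
    | zero => exact fun hi => by simpa using h0 hi
    | succ i ih =>
      intro hi
      rw [Nat.odd_add_one, ← ih (by omega)]
      have := halt i hi
      tauto
  · refine ⟨fun i hi => ?_, fun h0 => by simpa using hp 0 h0⟩
    rw [hp i (by omega), hp (i + 1) hi, Nat.odd_add_one, not_not]

lemma IsAltWalk.getLast?_notMem_iff (hp : IsAltWalk M p) (hpos : 0 < p.length) :
    (∀ e, p.edges.getLast? = some e → e ∉ M.edgeSet) ↔ Odd p.length := by
  simp only [List.getLast?_eq_getElem?, Walk.length_edges, List.getElem?_eq_some_iff,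
    forall_exists_index, forall_apply_eq_imp_iff, Walk.getElem_edges, mem_edgeSet,
    hp (p.length - 1) (by omega), Nat.odd_iff]
  omega

lemma SimpleGraph.Walk.forall_mem_support_tail_dropLast_iff {P : V → Prop} :
    (∀ w ∈ p.support.tail.dropLast, P w) ↔
      ∀ i, 0 < i → i < p.length → P (p.getVert i) := by
  simp only [List.forall_mem_iff_getElem, List.getElem_dropLast, List.getElem_tail,
    List.length_dropLast, List.length_tail, Walk.length_support, Walk.support_getElem_eq_getVert]
  refine ⟨fun h i hi0 hiL => ?_, fun h i hi => h (i + 1) (by omega) (by omega)⟩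
  simpa [Nat.sub_add_cancel hi0] using h (i - 1) (by omega)

lemma isAugTrail_iff_of_isPath (hpath : p.IsPath) :
    IsAugTrail G M k p ↔
      IsAugWalk M k p ∧ ∀ i, 0 < i → i < p.length → mdeg M (p.getVert i) = k := by
  constructor
  · rintro ⟨halt, hne, hhead, hlast, hu, hv, hfill, -⟩
    have hp := (isAltTrail_and_head_notMem_iff.1 ⟨halt, hhead⟩).2
    have hpos : 0 < p.length := by simpa using List.length_pos_iff.2 hne
    exact ⟨⟨hp, (hp.getLast?_notMem_iff hpos).1 hlast, hu, hv⟩,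
      p.forall_mem_support_tail_dropLast_iff.1 hfill⟩
  · rintro ⟨hp, hfill⟩
    have hpos := hp.odd_length.pos
    obtain ⟨halt, hhead⟩ := isAltTrail_and_head_notMem_iff.2 ⟨hpath.isTrail, hp.isAltWalk⟩
    refine ⟨halt, List.length_pos_iff.1 (by rwa [Walk.length_edges]), hhead,
      (hp.isAltWalk.getLast?_notMem_iff hpos).2 hp.odd_length, hp.mdeg_start_lt, hp.mdeg_end_lt,
      p.forall_mem_support_tail_dropLast_iff.2 hfill, fun huv => ?_⟩
    have := (hpath.getVert_eq_start_iff le_rfl).1 (by rw [Walk.getVert_length, huv])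
    omega

end Trail

section Augment

variable {a b : V} {p : G.Walk a b}

lemma IsAugWalk.mdeg_symmDiff_start [Finite V] (hp : IsAugWalk M k p) (hpath : p.IsPath) :
    mdeg (M ∆ p.toSubgraph.spanningCoe) a = mdeg M a + 1 := by
  have hnil : ¬p.Nil := Walk.not_nil_iff_lt_length.2 hp.odd_length.pos
  refine mdeg_symmDiff_of_neighborSet_eq_singleton
    (hpath.neighborSet_toSubgraph_startpoint hnil) ?_
  simpa [Walk.snd] using hp.isAltWalk 0 hp.odd_length.pos

lemma IsAugWalk.mdeg_symmDiff_end [Finite V] (hp : IsAugWalk M k p) (hpath : p.IsPath) :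
    mdeg (M ∆ p.toSubgraph.spanningCoe) b = mdeg M b + 1 := by
  have hpos := hp.odd_length.pos
  refine mdeg_symmDiff_of_neighborSet_eq_singleton
    (hpath.neighborSet_toSubgraph_endpoint (Walk.not_nil_iff_lt_length.2 hpos)) fun hadj => ?_
  have hodd := (hp.isAltWalk (p.length - 1) (by omega)).1
    (by rw [Nat.sub_add_cancel hpos, Walk.getVert_length]; exact hadj.symm)
  have := hp.odd_length
  simp only [Nat.odd_iff] at hodd this
  omega

lemma IsAugWalk.mdeg_symmDiff_of_ne (hp : IsAugWalk M k p) (hpath : p.IsPath) {v : V}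
    (hva : v ≠ a) (hvb : v ≠ b) : mdeg (M ∆ p.toSubgraph.spanningCoe) v = mdeg M v := by
  by_cases hv : v ∈ p.support
  · obtain ⟨i, rfl, hi⟩ := Walk.mem_support_iff_exists_getVert.1 hv
    have hi0 : i ≠ 0 := by rintro rfl; exact hva p.getVert_zero
    have hiL : i < p.length := lt_of_le_of_ne hi (by rintro rfl; exact hvb p.getVert_length)
    have hprev := hp.isAltWalk (i - 1) (by omega)
    rw [Nat.sub_add_cancel (by omega)] at hprev
    have hnext := hp.isAltWalk i hiL
    have hN := hpath.neighborSet_toSubgraph_internal hi0 hiL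
    rcases Nat.even_or_odd i with hi | hi
    · exact mdeg_symmDiff_of_neighborSet_eq_pair hN
        (hprev.2 (Nat.Even.sub_odd (by omega) hi odd_one)).symm
        fun h => Nat.not_odd_iff_even.2 hi (hnext.1 h)
    · rw [Set.pair_comm] at hN
      refine mdeg_symmDiff_of_neighborSet_eq_pair hN (hnext.2 hi) fun h => ?_
      have := hprev.1 h.symm
      simp only [Nat.odd_iff] at this hi
      omega
  · exact mdeg_symmDiff_of_neighborSet_eq_empty <| Set.eq_empty_of_forall_notMem fun w hw =>
      hv (Walk.mem_support_of_adj_toSubgraph hw)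

lemma IsAugWalk.augment [Fintype V] (hM : IsKLimitedSpanning G M k) (hp : IsAugWalk M k p)
    (hpath : p.IsPath) :
    IsKLimitedSpanning G (M ∆ p.toSubgraph.spanningCoe) k ∧
      sigmaDef (M ∆ p.toSubgraph.spanningCoe) k < sigmaDef M k := by
  have hdeg : ∀ v, mdeg (M ∆ p.toSubgraph.spanningCoe) v ≤ k ∧
      k - mdeg (M ∆ p.toSubgraph.spanningCoe) v ≤ k - mdeg M v := fun v => by
    by_cases hva : v = a
    · subst hva; rw [hp.mdeg_symmDiff_start hpath]; have := hp.mdeg_start_lt; omega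
    by_cases hvb : v = b
    · subst hvb; rw [hp.mdeg_symmDiff_end hpath]; have := hp.mdeg_end_lt; omega
    rw [hp.mdeg_symmDiff_of_ne hpath hva hvb]
    exact ⟨hM.2 v, le_rfl⟩
  refine ⟨⟨symmDiff_le_sup.trans (sup_le hM.1 p.toSubgraph.spanningCoe_le),
    fun v => (hdeg v).1⟩, sum_lt_sum (fun v _ => (hdeg v).2) ⟨a, mem_univ a, ?_⟩⟩
  rw [hp.mdeg_symmDiff_start hpath]
  have := hp.mdeg_start_lt
  omega

end Augment

lemma exists_mdeg_lt_of_sigmaDef_pos [Fintype V] (h : 0 < sigmaDef M k) : ∃ v, mdeg M v < k := by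
  obtain ⟨v, -, hv⟩ := exists_ne_zero_of_sum_ne_zero h.ne'
  exact ⟨v, by omega⟩

lemma IsKLimitedSpanning.isKFactor_of_sigmaDef_eq_zero [Fintype V]
    (hM : IsKLimitedSpanning G M k) (h : sigmaDef M k = 0) : IsKFactor G M k :=
  ⟨hM.1, fun v => by have := sum_eq_zero_iff.1 h v (mem_univ v); have := hM.2 v; omega⟩

lemma isKLimitedSpanning_bot : IsKLimitedSpanning G ⊥ k :=
  ⟨bot_le, fun v => by simp [mdeg]⟩

theorem exists_isAugTrail_isPath_of_isKFactor [Fintype V] (hbip : G.Colorable 2)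
    {F : SimpleGraph V} (hF : IsKFactor G F k) (hM : IsKLimitedSpanning G M k)
    (hσ : 0 < sigmaDef M k) : ∃ (a b : V) (p : G.Walk a b), IsAugTrail G M k p ∧ p.IsPath := by
  classical
  obtain ⟨u, hu⟩ := exists_mdeg_lt_of_sigmaDef_pos hσ
  have hex : ∃ n, ∃ (a b : V) (p : G.Walk a b), IsAugWalk M k p ∧ p.length = n := by
    obtain ⟨v, p, hp⟩ := exists_isAugWalk_of_isKFactor hF hM hu
    exact ⟨_, u, v, p, hp, rfl⟩
  obtain ⟨a, b, p, hp, hlen⟩ := Nat.find_spec hex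
  have hmin : ∀ (a' b' : V) (q : G.Walk a' b'), IsAugWalk M k q → p.length ≤ q.length :=
    fun a' b' q hq => hlen ▸ Nat.find_min' hex ⟨a', b', q, hq, rfl⟩
  have hpath := hp.isPath_of_minimal hbip hmin
  exact ⟨a, b, p, (isAugTrail_iff_of_isPath hpath).2
    ⟨hp, fun i => hp.mdeg_getVert_eq_of_minimal hM.2 hmin⟩, hpath⟩

end

theorem kFactor_iff_augPaths_of_bipartite_general [Fintype V] (G : SimpleGraph V) (k : ℕ)
    (hbip : G.Colorable 2) :
    (∃ F : SimpleGraph V, IsKFactor G F k) ↔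
      (∀ M : SimpleGraph V, IsKLimitedSpanning G M k → 0 < sigmaDef M k →
        ∃ (a b : V) (p : G.Walk a b), IsAugTrail G M k p ∧ p.IsPath) := by
  refine ⟨fun ⟨F, hF⟩ M hM hσ => exists_isAugTrail_isPath_of_isKFactor hbip hF hM hσ,
    fun H => ?_⟩
  obtain ⟨M, hM, hmin⟩ := (measure fun M : SimpleGraph V => sigmaDef M k).wf.has_min
    {M | IsKLimitedSpanning G M k} ⟨⊥, isKLimitedSpanning_bot⟩
  refine ⟨M, hM.isKFactor_of_sigmaDef_eq_zero (Nat.eq_zero_of_not_pos fun hσ => ?_)⟩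
  obtain ⟨a, b, p, hp, hpath⟩ := H M hM hσ
  obtain ⟨hM', hlt⟩ := ((isAugTrail_iff_of_isPath hpath).1 hp).1.augment hM hpath
  exact hmin _ hM' hlt

/-- Theorem 3.1: A bipartite (2-colorable) graph `G` has a `k`-factor iff
for every `k`-limited spanning subgraph `M` with `σ(M) > 0` there is an `M`-augmenting
trail which is a path. -/
theorem kFactor_iff_augPaths_of_bipartite [Fintype V] (G : SimpleGraph V) (k : ℕ)
    (hk : 1 ≤ k) (hbip : G.Colorable 2) :
    (∃ F : SimpleGraph V, IsKFactor G F k) ↔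
      (∀ M : SimpleGraph V, IsKLimitedSpanning G M k → 0 < sigmaDef M k →
        ∃ (a b : V) (p : G.Walk a b), IsAugTrail G M k p ∧ p.IsPath) :=
  kFactor_iff_augPaths_of_bipartite_general G k hbip
end
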